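/- Symmetric strong Ekeland principle (IV). In the abstract symmetrization framework, let X be a Banach space and f : X → ℝ ∪ {+∞} a proper, bounded below, lower semicontinuous functional such that f(u^H) ≤ f(u) for all u ∈ S and all H ∈ ℋ*. Then for every ρ₁ > 0, ρ₂ > 0, σ > 0 and every u ∈ S with f(u) < inf_X f + σρ₁, there exists v ∈ X such that: (a) ‖v − v*‖_V < (K(C_Θ+1)+1)(ρ₁+ρ₂); (b) f(w) ≥ f(v) − σ‖w − v‖ for all w ∈ X; (c) for every sequence (u_h) ⊂ X, if lim_h (f(u_h) + σ‖u_h − v‖) = f(v) then u_h → v in X. -/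

import Mathlib

/-!
Start from `T u`, an iterated polarization of `u` lying within `ρ₁ + ρ₂` of `u*` in `V` with
`f (T u) ≤ f u`, and apply the strong Ekeland principle there: Ekeland's principle with slope
`σ ρ₁ / (ρ₁ + ρ₂) < σ` yields `v` with `‖v - T u‖ < ρ₁ + ρ₂`, and the slack in the slope gives
well-posedness. Symmetrization is nonexpansive on `S` (a limit of nonexpansive polarizations),
hence `C_Θ`-Lipschitz on `X` through `Θ`, so `v*` stays close to `(T u)* = u*`, and the triangle
inequality bounds `‖v - v*‖_V`.
-/

open Filter Topology Metric Set

lemma LowerSemicontinuous.toReal {X : Type*} [TopologicalSpace X] {g : X → EReal}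
    (hg : LowerSemicontinuous g) (hbot : ∀ x, g x ≠ ⊥) (htop : ∀ x, g x ≠ ⊤) :
    LowerSemicontinuous fun x => (g x).toReal := by
  intro x y hy
  have hlt : (y : EReal) < g x := by
    rw [← EReal.coe_toReal (htop x) (hbot x)]
    exact_mod_cast hy
  filter_upwards [hg x y hlt] with z hz
  rw [← EReal.coe_toReal (htop z) (hbot z)] at hz
  exact_mod_cast hz

section Ekeland

variable {X : Type*} [MetricSpace X] {f : X → ℝ} {ε : ℝ}

def ekelandSet (f : X → ℝ) (ε : ℝ) (x : X) : Set X := {y | f y + ε * dist y x ≤ f x}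

lemma self_mem_ekelandSet (x : X) : x ∈ ekelandSet f ε x := by
  simp [ekelandSet]

lemma ekelandSet_subset (hε : 0 ≤ ε) {x y : X} (hy : y ∈ ekelandSet f ε x) :
    ekelandSet f ε y ⊆ ekelandSet f ε x := fun z hz => by
  have := mul_le_mul_of_nonneg_left (dist_triangle z y x) hε
  simp only [ekelandSet, mem_ofPred_eq] at hy hz ⊢
  linarith

lemma LowerSemicontinuous.isClosed_ekelandSet (hf : LowerSemicontinuous f) (x : X) :
    IsClosed (ekelandSet f ε x) :=
  (hf.add ((continuous_const.mul (continuous_id.dist continuous_const)).lowerSemicontinuous)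
    ).isClosed_preimage (f x)

lemma exists_mem_ekelandSet_forall_le (hbdd : BddBelow (range f)) (x : X) {δ : ℝ}
    (hδ : 0 < δ) : ∃ y ∈ ekelandSet f ε x, ∀ w ∈ ekelandSet f ε x, f y ≤ f w + δ := by
  have hne : (f '' ekelandSet f ε x).Nonempty := ⟨_, mem_image_of_mem f (self_mem_ekelandSet x)⟩
  obtain ⟨_, ⟨y, hy, rfl⟩, hlt⟩ := exists_lt_of_csInf_lt hne (lt_add_of_pos_right _ hδ)
  refine ⟨y, hy, fun w hw => ?_⟩
  have := csInf_le (hbdd.mono (image_subset_range _ _)) (mem_image_of_mem f hw)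
  linarith

lemma dist_le_of_forall_le_add_mul (hε : 0 < ε) {x y w : X} {r : ℝ}
    (hy : y ∈ ekelandSet f ε x) (hmin : ∀ z ∈ ekelandSet f ε x, f y ≤ f z + ε * r)
    (hw : w ∈ ekelandSet f ε y) : dist w y ≤ r := by
  have hfy := hmin w (ekelandSet_subset hε.le hy hw)
  simp only [ekelandSet, mem_ofPred_eq] at hw
  exact le_of_mul_le_mul_left (by linarith) hε

theorem LowerSemicontinuous.exists_ekelandSet_eq_singleton [CompleteSpace X]
    (hf : LowerSemicontinuous f) (hbdd : BddBelow (range f)) (hε : 0 < ε) (x₀ : X) :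
    ∃ v ∈ ekelandSet f ε x₀, ∀ w ∈ ekelandSet f ε v, w = v := by
  -- `next n x` minimizes `f` on `ekelandSet f ε x` up to `ε (1/2)^n`, which confines the next
  -- set of the chain to the ball of radius `(1/2)^n`.
  choose next hnext_mem hnext_min using fun (n : ℕ) (x : X) =>
    exists_mem_ekelandSet_forall_le (ε := ε) hbdd x (δ := ε * (1 / 2) ^ n) (by positivity)
  let x : ℕ → X := fun n => Nat.rec x₀ next n
  have hanti : Antitone fun n => ekelandSet f ε (x n) :=
    antitone_nat_of_succ_le fun n => ekelandSet_subset hε.le (hnext_mem n (x n))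
  have hclose : ∀ n, ∀ w ∈ ekelandSet f ε (x (n + 1)), dist w (x (n + 1)) ≤ (1 / 2) ^ n :=
    fun n _ => dist_le_of_forall_le_add_mul hε (hnext_mem n (x n)) (hnext_min n (x n))
  have hcauchy : CauchySeq fun n => x (n + 1) := by
    refine cauchySeq_of_le_geometric (1 / 2) 1 (by norm_num) fun n => ?_
    rw [dist_comm, one_mul]
    exact hclose n _ (hnext_mem (n + 1) (x (n + 1)))
  obtain ⟨v, hv⟩ := cauchySeq_tendsto_of_complete hcauchy
  have hv_mem : ∀ n, v ∈ ekelandSet f ε (x n) := fun n =>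
    (hf.isClosed_ekelandSet (x n)).mem_of_tendsto hv <| eventually_atTop.2
      ⟨n, fun m hm => hanti (by omega : n ≤ m + 1) (self_mem_ekelandSet _)⟩
  refine ⟨v, hv_mem 0, fun w hw => dist_le_zero.1 ?_⟩
  have hw_mem : ∀ n, w ∈ ekelandSet f ε (x n) := fun n =>
    ekelandSet_subset hε.le (hv_mem n) hw
  have htend : Tendsto (fun n : ℕ => 2 * (1 / 2 : ℝ) ^ n) atTop (𝓝 0) := by
    simpa using (tendsto_pow_atTop_nhds_zero_of_lt_one (r := (1 / 2 : ℝ)) (by norm_num)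
      (by norm_num)).const_mul 2
  refine ge_of_tendsto' htend fun n => ?_
  calc dist w v ≤ dist w (x (n + 1)) + dist v (x (n + 1)) := dist_triangle_right _ _ _
    _ ≤ 2 * (1 / 2) ^ n := by
      linarith [hclose n w (hw_mem (n + 1)), hclose n v (hv_mem (n + 1))]

theorem LowerSemicontinuous.exists_ekeland [CompleteSpace X] (hf : LowerSemicontinuous f)
    (hbdd : BddBelow (range f)) (hε : 0 < ε) (x₀ : X) :
    ∃ v, f v + ε * dist v x₀ ≤ f x₀ ∧ ∀ w, f v ≤ f w + ε * dist w v := by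
  obtain ⟨v, hv, hmin⟩ := hf.exists_ekelandSet_eq_singleton hbdd hε x₀
  refine ⟨v, hv, fun w => ?_⟩
  by_cases hw : w ∈ ekelandSet f ε v
  · simp [hmin w hw]
  · exact (not_le.1 hw).le

theorem LowerSemicontinuous.exists_ereal_ekeland [CompleteSpace X] {f : X → EReal}
    (hf : LowerSemicontinuous f) {c : ℝ} (hc : ∀ x, (c : EReal) ≤ f x) (hε : 0 < ε) {x₀ : X}
    (hx₀ : f x₀ ≠ ⊤) :
    ∃ v, f v + ((ε * dist v x₀ : ℝ) : EReal) ≤ f x₀ ∧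
      ∀ w, f v ≤ f w + ((ε * dist w v : ℝ) : EReal) := by
  -- Truncating at the level `f x₀` gives a real-valued function with the same Ekeland points.
  set g : X → ℝ := fun x => (min (f x) (f x₀)).toReal
  have hg_coe : ∀ x, (g x : EReal) = min (f x) (f x₀) := fun x =>
    EReal.coe_toReal (min_le_right _ _ |>.trans_lt hx₀.lt_top).ne
      (ne_bot_of_le_ne_bot (EReal.coe_ne_bot c) (le_min (hc x) (hc x₀)))
  have hg : LowerSemicontinuous g := (hf.inf lowerSemicontinuous_const).toReal
    (fun x => ne_bot_of_le_ne_bot (EReal.coe_ne_bot c) (le_min (hc x) (hc x₀)))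
    (fun x => (min_le_right _ _ |>.trans_lt hx₀.lt_top).ne)
  have hbdd : BddBelow (range g) :=
    ⟨c, forall_mem_range.2 fun x => EReal.coe_le_coe_iff.1 (hg_coe x ▸ le_min (hc x) (hc x₀))⟩
  obtain ⟨v, hv, hmin⟩ := hg.exists_ekeland hbdd hε x₀
  have hgx₀ : (g x₀ : EReal) = f x₀ := by rw [hg_coe, min_self]
  have hfv : f v ≤ f x₀ := by
    by_contra! hlt
    have hgv : g v = g x₀ := by simp only [g, min_eq_right hlt.le, min_self]
    have hvx₀ : v = x₀ := by
      rw [hgv] at hv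
      exact dist_le_zero.1 (nonpos_of_mul_nonpos_right (by linarith) hε)
    exact hlt.ne (by rw [hvx₀])
  have hgv : (g v : EReal) = f v := by rw [hg_coe, min_eq_left hfv]
  refine ⟨v, ?_, fun w => ?_⟩
  · rw [← hgv, ← hgx₀, ← EReal.coe_add]
    exact_mod_cast hv
  · calc f v = g v := hgv.symm
      _ ≤ ((g w + ε * dist w v : ℝ) : EReal) := EReal.coe_le_coe_iff.2 (hmin w)
      _ ≤ f w + ((ε * dist w v : ℝ) : EReal) := by
        rw [EReal.coe_add, hg_coe]
        gcongr
        exact min_le_left _ _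

end Ekeland

section StrongEkeland

variable {X : Type*} [MetricSpace X] {f : X → EReal}

lemma tendsto_of_le_add_mul_dist {ε σ a : ℝ} (hεσ : ε < σ) {v : X} (hv : f v = a)
    (hmin : ∀ w, f v ≤ f w + ((ε * dist w v : ℝ) : EReal)) {us : ℕ → X}
    (hus : Tendsto (fun n => f (us n) + ((σ * dist (us n) v : ℝ) : EReal)) atTop (𝓝 (f v))) :
    Tendsto us atTop (𝓝 v) := by
  rw [Metric.tendsto_atTop]
  intro η hη
  have hlt : f v < ((a + (σ - ε) * η : ℝ) : EReal) := by
    rw [hv, EReal.coe_lt_coe_iff]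
    nlinarith
  obtain ⟨N, hN⟩ := eventually_atTop.1 (hus.eventually_lt_const hlt)
  refine ⟨N, fun n hn => ?_⟩
  by_contra! hfar
  refine (hN n hn).not_ge ?_
  calc ((a + (σ - ε) * η : ℝ) : EReal)
      ≤ f v + (((σ - ε) * dist (us n) v : ℝ) : EReal) := by
        rw [hv, ← EReal.coe_add, EReal.coe_le_coe_iff]
        nlinarith
    _ ≤ f (us n) + ((ε * dist (us n) v : ℝ) : EReal) +
          (((σ - ε) * dist (us n) v : ℝ) : EReal) := by
        gcongr
        exact hmin _
    _ = f (us n) + ((σ * dist (us n) v : ℝ) : EReal) := by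
        rw [add_assoc, ← EReal.coe_add]
        ring_nf

theorem LowerSemicontinuous.exists_strong_ekeland [CompleteSpace X] (hf : LowerSemicontinuous f)
    {c : ℝ} (hc : ∀ x, (c : EReal) ≤ f x) {σ ρ₁ ρ : ℝ} (hσ : 0 < σ) (hρ₁ : 0 < ρ₁) (hρ : ρ₁ < ρ)
    {x₀ : X} (hx₀ : f x₀ < (⨅ w, f w) + ((σ * ρ₁ : ℝ) : EReal)) :
    ∃ v, dist v x₀ < ρ ∧ (∀ w, f v ≤ f w + ((σ * dist w v : ℝ) : EReal)) ∧
      ∀ us : ℕ → X,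
        Tendsto (fun n => f (us n) + ((σ * dist (us n) v : ℝ) : EReal)) atTop (𝓝 (f v)) →
        Tendsto us atTop (𝓝 v) := by
  -- Ekeland at the smaller slope `ε` keeps `v` within `ρ` of `x₀`; the gap `σ - ε` forces
  -- minimizing sequences of `f + σ • dist · v` to converge.
  set ε := σ * ρ₁ / ρ
  have hρ₀ : 0 < ρ := hρ₁.trans hρ
  have hε : 0 < ε := by positivity
  have hεσ : ε < σ := (div_lt_iff₀ hρ₀).2 (by nlinarith)
  have hερ : ε * ρ = σ * ρ₁ := div_mul_cancel₀ _ hρ₀.ne'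
  obtain ⟨v, hv₀, hmin⟩ := hf.exists_ereal_ekeland hc hε hx₀.ne_top
  have hfv : f v ≤ f x₀ := le_of_add_le_of_nonneg_left hv₀ (by positivity)
  obtain ⟨a, ha⟩ : ∃ a : ℝ, f v = a := ⟨_, (EReal.coe_toReal (hfv.trans_lt hx₀.lt_top).ne
    (ne_bot_of_le_ne_bot (EReal.coe_ne_bot c) (hc v))).symm⟩
  refine ⟨v, ?_, fun w => (hmin w).trans ?_, fun us => tendsto_of_le_add_mul_dist hεσ ha hmin⟩
  · have hlt : f v + ((ε * dist v x₀ : ℝ) : EReal) < f v + ((ε * ρ : ℝ) : EReal) := by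
      calc _ ≤ f x₀ := hv₀
        _ < (⨅ w, f w) + ((σ * ρ₁ : ℝ) : EReal) := hx₀
        _ ≤ f v + ((ε * ρ : ℝ) : EReal) := by rw [hερ]; gcongr; exact iInf_le _ v
    rw [ha, ← EReal.coe_add, ← EReal.coe_add, EReal.coe_lt_coe_iff] at hlt
    exact lt_of_mul_lt_mul_left (by linarith) hε.le
  · gcongr

end StrongEkeland

section Polarization

variable {X V P : Type*} [SeminormedAddCommGroup V] {S : Set X} {pol : X → P → X}

lemma foldl_le_of_forall_le {β : Type*} [Preorder β] {f : X → β}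
    (hS : ∀ u ∈ S, ∀ H, pol u H ∈ S) (hf : ∀ u ∈ S, ∀ H, f (pol u H) ≤ f u) (l : List P) {u : X}
    (hu : u ∈ S) : f (l.foldl pol u) ≤ f u := by
  induction l generalizing u with
  | nil => exact le_rfl
  | cons H l ih => exact (ih (hS u hu H)).trans (hf u hu H)

lemma norm_sub_foldl_le (ι : X → V) (hS : ∀ u ∈ S, ∀ H, pol u H ∈ S)
    (hpol : ∀ u ∈ S, ∀ v ∈ S, ∀ H, ‖ι (pol u H) - ι (pol v H)‖ ≤ ‖ι u - ι v‖) (l : List P)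
    {u v : X} (hu : u ∈ S) (hv : v ∈ S) :
    ‖ι (l.foldl pol u) - ι (l.foldl pol v)‖ ≤ ‖ι u - ι v‖ := by
  induction l generalizing u v with
  | nil => exact le_rfl
  | cons H l ih => exact (ih (hS u hu H) (hS v hv H)).trans (hpol u hu v hv H)

lemma norm_sub_le_of_tendsto_foldl (ι : X → V) (hS : ∀ u ∈ S, ∀ H, pol u H ∈ S)
    (hpol : ∀ u ∈ S, ∀ v ∈ S, ∀ H, ‖ι (pol u H) - ι (pol v H)‖ ≤ ‖ι u - ι v‖) {sy : X → X}
    (happrox : ∃ Hs : ℕ → P, ∀ u ∈ S,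
      Tendsto (fun m => ι (List.foldl pol u ((List.range m).map Hs))) atTop (𝓝 (ι (sy u))))
    {u v : X} (hu : u ∈ S) (hv : v ∈ S) : ‖ι (sy u) - ι (sy v)‖ ≤ ‖ι u - ι v‖ := by
  obtain ⟨Hs, hHs⟩ := happrox
  exact le_of_tendsto' ((hHs u hu).sub (hHs v hv)).norm fun m =>
    norm_sub_foldl_le ι hS hpol _ hu hv

end Polarization

lemma norm_sub_le_mul_of_eq_comp {X V : Type*} [SeminormedAddCommGroup V] {S : Set X}
    (ι : X → V) {g Θ : X → X} {C : ℝ}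
    (hg : ∀ u ∈ S, ∀ v ∈ S, ‖ι (g u) - ι (g v)‖ ≤ ‖ι u - ι v‖) (hΘS : ∀ u, Θ u ∈ S)
    (hΘ : ∀ u v, ‖ι (Θ u) - ι (Θ v)‖ ≤ C * ‖ι u - ι v‖) (hgΘ : ∀ u, g u = g (Θ u)) (u v : X) :
    ‖ι (g u) - ι (g v)‖ ≤ C * ‖ι u - ι v‖ := by
  rw [hgΘ u, hgΘ v]
  exact (hg _ (hΘS u) _ (hΘS v)).trans (hΘ u v)

lemma norm_sub_apply_lt_of_norm_sub_lt {X V : Type*} [SeminormedAddCommGroup X]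
    [NormedSpace ℝ X] [SeminormedAddCommGroup V] [NormedSpace ℝ V] (ι : X →L[ℝ] V) {g : X → X}
    {K C ρ : ℝ} (hK : 0 ≤ K) (hι : ∀ u, ‖ι u‖ ≤ K * ‖u‖) (hC : 0 ≤ C)
    (hg : ∀ u v, ‖ι (g u) - ι (g v)‖ ≤ C * ‖ι u - ι v‖) {u v : X} (hvu : ‖v - u‖ < ρ)
    (hu : ‖ι u - ι (g u)‖ < ρ) : ‖ι v - ι (g v)‖ < (K * (C + 1) + 1) * ρ := by
  have hιvu : ‖ι v - ι u‖ ≤ K * ρ := by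
    rw [← map_sub]
    exact (hι _).trans (by gcongr)
  have hgvu : ‖ι (g u) - ι (g v)‖ ≤ C * (K * ρ) :=
    (hg u v).trans (by rw [norm_sub_rev]; gcongr)
  linarith [norm_sub_le_norm_sub_add_norm_sub (ι v) (ι u) (ι (g u)),
    norm_sub_le_norm_sub_add_norm_sub (ι v) (ι (g u)) (ι (g v))]

theorem symmetric_strong_ekeland_IV_general
    {X : Type*} [NormedAddCommGroup X] [NormedSpace ℝ X] [CompleteSpace X]
    {V : Type*} [NormedAddCommGroup V] [NormedSpace ℝ V]
    (ι : X →L[ℝ] V)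
    (K : ℝ) (hK : 0 < K) (hιK : ∀ u : X, ‖ι u‖ ≤ K * ‖u‖)
    (S : Set X)
    {P : Type*}
    (pol : X → P → X) (sy : X → X)
    (hpolS : ∀ u ∈ S, ∀ H : P, pol u H ∈ S)
    (happrox : ∃ Hs : ℕ → P, ∀ u ∈ S,
      Filter.Tendsto (fun m => ι (List.foldl pol u ((List.range m).map Hs)))
        Filter.atTop (nhds (ι (sy u))))
    (hpolContr : ∀ u ∈ S, ∀ v ∈ S, ∀ H : P, ‖ι (pol u H) - ι (pol v H)‖ ≤ ‖ι u - ι v‖)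
    (Θ : X → X) (CΘ : ℝ) (hCΘ : 0 < CΘ)
    (hΘS : ∀ u : X, Θ u ∈ S)
    (hΘlip : ∀ u v : X, ‖ι (Θ u) - ι (Θ v)‖ ≤ CΘ * ‖ι u - ι v‖)
    (hsyext : ∀ u : X, sy u = sy (Θ u))
    (T : ℝ → X → X)
    (hTpol : ∀ ρ > (0:ℝ), ∀ u ∈ S, ∃ l : List P, T ρ u = List.foldl pol u l)
    (hTsy : ∀ ρ > (0:ℝ), ∀ u ∈ S, sy (T ρ u) = sy u)
    (hTapprox : ∀ ρ > (0:ℝ), ∀ u ∈ S, ‖ι (T ρ u) - ι (sy u)‖ < ρ)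
    (f : X → EReal)
    (hfbdd : ∃ c : ℝ, ∀ u, (c : EReal) ≤ f u)
    (hflsc : LowerSemicontinuous f)
    (hfpol : ∀ u ∈ S, ∀ H : P, f (pol u H) ≤ f u)
    (ρ₁ ρ₂ σ : ℝ) (hρ₁ : 0 < ρ₁) (hρ₂ : 0 < ρ₂) (hσ : 0 < σ)
    (u : X) (hu : u ∈ S)
    (hfu : f u < (⨅ w, f w) + ((σ * ρ₁ : ℝ) : EReal)) :
    ∃ v : X,
      ‖ι v - ι (sy v)‖ < (K * (CΘ + 1) + 1) * (ρ₁ + ρ₂) ∧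
      (∀ w : X, f v - ((σ * ‖w - v‖ : ℝ) : EReal) ≤ f w) ∧
      (∀ us : ℕ → X,
        Filter.Tendsto (fun h => f (us h) + ((σ * ‖us h - v‖ : ℝ) : EReal))
          Filter.atTop (nhds (f v)) →
        Filter.Tendsto us Filter.atTop (nhds v)) := by
  obtain ⟨c, hc⟩ := hfbdd
  have hsy : ∀ v w : X, ‖ι (sy v) - ι (sy w)‖ ≤ CΘ * ‖ι v - ι w‖ :=
    norm_sub_le_mul_of_eq_comp ι (fun _ hv _ hw => norm_sub_le_of_tendsto_foldl ι hpolS hpolContr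
      happrox hv hw) hΘS hΘlip hsyext
  have hρ : 0 < ρ₁ + ρ₂ := by positivity
  have hfTu : f (T (ρ₁ + ρ₂) u) ≤ f u := by
    obtain ⟨l, hl⟩ := hTpol _ hρ u hu
    exact hl ▸ foldl_le_of_forall_le hpolS hfpol l hu
  obtain ⟨v, hvTu, hvmin, hvwell⟩ := hflsc.exists_strong_ekeland hc hσ hρ₁
    (lt_add_of_pos_right ρ₁ hρ₂) (hfTu.trans_lt hfu)
  refine ⟨v, ?_, fun w => ?_, fun us hus => hvwell us (by simpa only [dist_eq_norm] using hus)⟩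
  · refine norm_sub_apply_lt_of_norm_sub_lt ι hK.le hιK hCΘ.le hsy
      (by rwa [dist_eq_norm] at hvTu) ?_
    simpa only [hTsy _ hρ u hu] using hTapprox _ hρ u hu
  · rw [EReal.sub_le_iff_le_add (Or.inl (EReal.coe_ne_bot _)) (Or.inl (EReal.coe_ne_top _)),
      ← dist_eq_norm]
    exact hvmin w

theorem symmetric_strong_ekeland_IV
    {X : Type*} [NormedAddCommGroup X] [NormedSpace ℝ X] [CompleteSpace X]
    {V : Type*} [NormedAddCommGroup V] [NormedSpace ℝ V] [CompleteSpace V]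
    {W : Type*} [NormedAddCommGroup W] [NormedSpace ℝ W] [CompleteSpace W]
    (ι : X →L[ℝ] V) (κ : V →L[ℝ] W)
    (K : ℝ) (hK : 0 < K) (hιK : ∀ u : X, ‖ι u‖ ≤ K * ‖u‖)
    (S : Set X)
    {P : Type*} [TopologicalSpace P] [PathConnectedSpace P]
    (pol : X → P → X) (sy : X → X)
    (hpolS : ∀ u ∈ S, ∀ H : P, pol u H ∈ S)
    (hsyS : ∀ u : X, sy u ∈ S)
    (hpolCont : ContinuousOn (fun q : X × P => pol q.1 q.2) (S ×ˢ Set.univ))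
    (hsypol : ∀ u ∈ S, ∀ H : P,
      pol (sy u) H = sy u ∧ sy (pol u H) = sy u ∧ pol (pol u H) H = pol u H)
    (happrox : ∃ Hs : ℕ → P, ∀ u ∈ S,
      Filter.Tendsto (fun m => ι (List.foldl pol u ((List.range m).map Hs)))
        Filter.atTop (nhds (ι (sy u))))
    (hpolContr : ∀ u ∈ S, ∀ v ∈ S, ∀ H : P, ‖ι (pol u H) - ι (pol v H)‖ ≤ ‖ι u - ι v‖)
    (Θ : X → X) (CΘ : ℝ) (hCΘ : 0 < CΘ)
    (hΘS : ∀ u : X, Θ u ∈ S) (hΘid : ∀ u ∈ S, Θ u = u)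
    (hΘlip : ∀ u v : X, ‖ι (Θ u) - ι (Θ v)‖ ≤ CΘ * ‖ι u - ι v‖)
    (hpolext : ∀ u : X, ∀ H : P, pol u H = pol (Θ u) H)
    (hsyext : ∀ u : X, sy u = sy (Θ u))
    (T : ℝ → X → X)
    (hTS : ∀ ρ > (0:ℝ), ∀ u ∈ S, T ρ u ∈ S)
    (hTpol : ∀ ρ > (0:ℝ), ∀ u ∈ S, ∃ l : List P, T ρ u = List.foldl pol u l)
    (hTsy : ∀ ρ > (0:ℝ), ∀ u ∈ S, sy (T ρ u) = sy u)
    (hTapprox : ∀ ρ > (0:ℝ), ∀ u ∈ S, ‖ι (T ρ u) - ι (sy u)‖ < ρ)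
    (f : X → EReal)
    (hfproper : ∃ u, f u ≠ ⊤)
    (hfbdd : ∃ c : ℝ, ∀ u, (c : EReal) ≤ f u)
    (hflsc : LowerSemicontinuous f)
    (hfpol : ∀ u ∈ S, ∀ H : P, f (pol u H) ≤ f u)
    (ρ₁ ρ₂ σ : ℝ) (hρ₁ : 0 < ρ₁) (hρ₂ : 0 < ρ₂) (hσ : 0 < σ)
    (u : X) (hu : u ∈ S)
    (hfu : f u < (⨅ w, f w) + ((σ * ρ₁ : ℝ) : EReal)) :
    ∃ v : X,
      ‖ι v - ι (sy v)‖ < (K * (CΘ + 1) + 1) * (ρ₁ + ρ₂) ∧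
      (∀ w : X, f v - ((σ * ‖w - v‖ : ℝ) : EReal) ≤ f w) ∧
      (∀ us : ℕ → X,
        Filter.Tendsto (fun h => f (us h) + ((σ * ‖us h - v‖ : ℝ) : EReal))
          Filter.atTop (nhds (f v)) →
        Filter.Tendsto us Filter.atTop (nhds v)) :=
  symmetric_strong_ekeland_IV_general ι K hK hιK S pol sy hpolS happrox hpolContr Θ CΘ hCΘ hΘS hΘlip
    hsyext T hTpol hTsy hTapprox f hfbdd hflsc hfpol ρ₁ ρ₂ σ hρ₁ hρ₂ hσ u hu hfu
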